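/- arXiv:2405.08743 — 5 statements merged into one kernel-verified Lean document; each statement's English description precedes it below -/
import Mathlib

section
/- In the CHSH scenario with the deterministic assignment q(ab|xy) = δ_{a,+1}δ_{b,+1}, the tilted functional obtained from the CHSH functional C(p) = Σ_{x,y}(−1)^{xy}⟨A_x B_y⟩ is C_{η_A,η_B}(p) = C(p) + (2/η_B)(1−η_B)⟨A_0⟩ + (2/η_A)(1−η_A)⟨B_0⟩, and its local bound equals 2(1/η_A + 1/η_B − 1). -/
/-- in the CHSH scenario with the deterministic assignment
`q(ab|xy) = δ_{a,+1} δ_{b,+1}`, the tilted functional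
`C_{ηA,ηB}(p) = C(p) + (2/ηB)(1−ηB)⟨A₀⟩ + (2/ηA)(1−ηA)⟨B₀⟩`
has local bound `2(1/ηA + 1/ηB − 1)`: it is the maximum over the 16 local
deterministic behaviors, where each `⟨A_x⟩, ⟨B_y⟩ ∈ {−1,+1}` and
`⟨A_x B_y⟩ = ⟨A_x⟩⟨B_y⟩`. -/
theorem doublyTiltedCHSH_local_bound
    (ηA ηB : ℝ) (hηA : ηA ∈ Set.Ioc (0:ℝ) 1) (hηB : ηB ∈ Set.Ioc (0:ℝ) 1) :
    IsGreatest
      {v : ℝ | ∃ a0 a1 b0 b1 : ℝ,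
        a0 ∈ ({-1, 1} : Set ℝ) ∧ a1 ∈ ({-1, 1} : Set ℝ) ∧
        b0 ∈ ({-1, 1} : Set ℝ) ∧ b1 ∈ ({-1, 1} : Set ℝ) ∧
        v = (a0 * b0 + a0 * b1 + a1 * b0 - a1 * b1)
          + (2 / ηB) * (1 - ηB) * a0 + (2 / ηA) * (1 - ηA) * b0}
      (2 * (1 / ηA + 1 / ηB - 1)) := by
  obtain ⟨hA0, hA1⟩ := hηA
  obtain ⟨hB0, hB1⟩ := hηB
  constructor
  · refine ⟨1, 1, 1, 1, by norm_num, by norm_num, by norm_num, by norm_num, ?_⟩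
    field_simp
    ring
  · rintro v ⟨a0, a1, b0, b1, ha0, ha1, hb0, hb1, rfl⟩
    have hα : 0 ≤ 2 / ηB * (1 - ηB) := mul_nonneg (by positivity) (by linarith)
    have hβ : 0 ≤ 2 / ηA * (1 - ηA) := mul_nonneg (by positivity) (by linarith)
    have hgoal : 2 * (1 / ηA + 1 / ηB - 1) = 2 + 2 / ηB * (1 - ηB) + 2 / ηA * (1 - ηA) := by
      field_simp; ring
    rw [hgoal]
    rcases ha0 with rfl | rfl <;> rcases ha1 with rfl | rfl <;>
      rcases hb0 with rfl | rfl <;> rcases hb1 with rfl | rfl <;> nlinarith [hα, hβ]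
end

section
/- For the 4×4 real symmetric matrix Ĉ_{α,β} built from qubit observables A_0 = σ_z, A_1 = c_A σ_z + s_A σ_x, B_0 = σ_z, B_1 = c_B σ_z + s_B σ_x (with c_A² + s_A² = 1, c_B² + s_B² = 1) via Ĉ_{α,β} = A_0⊗B_0 + A_0⊗B_1 + A_1⊗B_0 − A_1⊗B_1 + α A_0⊗1 + β 1⊗B_0, the characteristic polynomial equals q(λ) = λ⁴ − 2λ²(α²+β²+4) + 8αβλ(c_A(c_B−1) − c_B − 1) + 8β² c_A(c_B²−1) − 8c_B(α² + (β²−2)c_B) + (α²−β²)² + 8c_A²(c_B−1)(α² − 2c_B − 2). -/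
open Matrix Kronecker

noncomputable def σz : Matrix (Fin 2) (Fin 2) ℝ := !![1, 0; 0, -1]
noncomputable def σx : Matrix (Fin 2) (Fin 2) ℝ := !![0, 1; 1, 0]

/-- The doubly-tilted CHSH Bell operator built from qubit observables
`A₀ = σz`, `A₁ = c_A σz + s_A σx`, `B₀ = σz`, `B₁ = c_B σz + s_B σx`. -/
noncomputable def bellOp (α β cA sA cB sB : ℝ) :
    Matrix (Fin 2 × Fin 2) (Fin 2 × Fin 2) ℝ :=
  let A0 := σz
  let A1 := cA • σz + sA • σx
  let B0 := σz
  let B1 := cB • σz + sB • σx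
  A0 ⊗ₖ B0 + A0 ⊗ₖ B1 + A1 ⊗ₖ B0 - A1 ⊗ₖ B1
    + α • (A0 ⊗ₖ (1 : Matrix (Fin 2) (Fin 2) ℝ))
    + β • ((1 : Matrix (Fin 2) (Fin 2) ℝ) ⊗ₖ B0)

/-!
In the product basis `|00⟩, |01⟩, |10⟩, |11⟩` the Bell operator is an explicit symmetric
`4 × 4` matrix whose off-diagonal entries are `s_B (1 - c_A)`, `s_A (1 - c_B)` and `s_A s_B` up to
sign. Expanding `det (t I - Ĉ)`, the sines `s_A`, `s_B` only survive through `s_A²` and `s_B²`,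
which the constraints `c² + s² = 1` eliminate.
-/

theorem Matrix.det_fin_four {R : Type*} [CommRing R] (A : Matrix (Fin 4) (Fin 4) R) :
    A.det =
      A 0 0 * A 1 1 * A 2 2 * A 3 3 - A 0 0 * A 1 1 * A 2 3 * A 3 2
      - A 0 0 * A 1 2 * A 2 1 * A 3 3 + A 0 0 * A 1 2 * A 2 3 * A 3 1
      + A 0 0 * A 1 3 * A 2 1 * A 3 2 - A 0 0 * A 1 3 * A 2 2 * A 3 1
      - A 0 1 * A 1 0 * A 2 2 * A 3 3 + A 0 1 * A 1 0 * A 2 3 * A 3 2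
      + A 0 1 * A 1 2 * A 2 0 * A 3 3 - A 0 1 * A 1 2 * A 2 3 * A 3 0
      - A 0 1 * A 1 3 * A 2 0 * A 3 2 + A 0 1 * A 1 3 * A 2 2 * A 3 0
      + A 0 2 * A 1 0 * A 2 1 * A 3 3 - A 0 2 * A 1 0 * A 2 3 * A 3 1
      - A 0 2 * A 1 1 * A 2 0 * A 3 3 + A 0 2 * A 1 1 * A 2 3 * A 3 0
      + A 0 2 * A 1 3 * A 2 0 * A 3 1 - A 0 2 * A 1 3 * A 2 1 * A 3 0
      - A 0 3 * A 1 0 * A 2 1 * A 3 2 + A 0 3 * A 1 0 * A 2 2 * A 3 1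
      + A 0 3 * A 1 1 * A 2 0 * A 3 2 - A 0 3 * A 1 1 * A 2 2 * A 3 0
      - A 0 3 * A 1 2 * A 2 0 * A 3 1 + A 0 3 * A 1 2 * A 2 1 * A 3 0 := by
  rw [det_succ_row_zero]
  simp [Fin.sum_univ_succ, det_fin_three, Fin.succAbove]
  ring

theorem reindex_bellOp (α β cA sA cB sB : ℝ) :
    reindex finProdFinEquiv finProdFinEquiv (bellOp α β cA sA cB sB) =
      !![1 + cA + cB - cA * cB + α + β, sB * (1 - cA), sA * (1 - cB), -(sA * sB);
         sB * (1 - cA), -(1 + cA + cB - cA * cB) + α - β, -(sA * sB), -(sA * (1 - cB));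
         sA * (1 - cB), -(sA * sB), -(1 + cA + cB - cA * cB) - α + β, -(sB * (1 - cA));
         -(sA * sB), -(sA * (1 - cB)), -(sB * (1 - cA)), 1 + cA + cB - cA * cB - α - β] := by
  ext i j
  fin_cases i <;> fin_cases j <;>
    simp [bellOp, σz, σx, finProdFinEquiv, Fin.divNat, Fin.modNat, one_apply] <;> ring

/-- the characteristic polynomial `det(λ I₄ − Ĉ_{α,β})` of the
doubly-tilted CHSH Bell operator equals
`λ⁴ − 2λ²(α²+β²+4) + 8αβλ(c_A(c_B−1) − c_B − 1) + 8β² c_A(c_B²−1)`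
`− 8c_B(α² + (β²−2)c_B) + (α²−β²)² + 8c_A²(c_B−1)(α² − 2c_B − 2)`. -/
theorem bellOp_charpoly (α β cA sA cB sB : ℝ)
    (hA : cA ^ 2 + sA ^ 2 = 1) (hB : cB ^ 2 + sB ^ 2 = 1) (t : ℝ) :
    (t • (1 : Matrix (Fin 2 × Fin 2) (Fin 2 × Fin 2) ℝ)
        - bellOp α β cA sA cB sB).det =
      t ^ 4 - 2 * t ^ 2 * (α ^ 2 + β ^ 2 + 4)
        + 8 * α * β * t * (cA * (cB - 1) - cB - 1)
        + 8 * β ^ 2 * cA * (cB ^ 2 - 1)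
        - 8 * cB * (α ^ 2 + (β ^ 2 - 2) * cB)
        + (α ^ 2 - β ^ 2) ^ 2
        + 8 * cA ^ 2 * (cB - 1) * (α ^ 2 - 2 * cB - 2) := by
  rw [← det_reindex_self finProdFinEquiv, ← coe_reindexAlgEquiv ℝ, map_sub, map_smul, map_one,
    coe_reindexAlgEquiv, reindex_bellOp, det_fin_four]
  simp only [Matrix.sub_apply, Matrix.smul_apply, one_apply, smul_eq_mul, of_apply, cons_val',
    cons_val_zero, cons_val_one, cons_val, cons_val_fin_one, Fin.reduceEq, ↓reduceIte]
  grind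
end

section
/- Suppose (λ, c_A, c_B) is a stationary point of the Lagrangian for maximizing the largest eigenvalue of the symmetrically tilted CHSH Bell operator, i.e., satisfies ∂_{c_A} q = 0 and ∂_{c_B} q = 0 for the characteristic polynomial q(λ, c_A, c_B, α) of the symmetric (α=β) case, with c_A, c_B ∈ [0,1) and α ∈ [0,1). Then c_A = c_B. -/
theorem stationarity_lhs_sub_swap {R : Type*} [CommRing R] (α lam cA cB : R) :
    ((α ^ 2 - 4 * cA) * (1 + cB) + 2 * α ^ 2 * cA + α ^ 2 * lam) -
        ((α ^ 2 - 4 * cB) * (1 + cA) + 2 * α ^ 2 * cB + α ^ 2 * lam) =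
      (cA - cB) * (α ^ 2 - 4) := by
  ring

theorem sq_ne_four_of_abs_lt_two {α : ℝ} (hα : |α| < 2) : α ^ 2 ≠ 4 := by
  have : α ^ 2 < 2 ^ 2 := sq_lt_sq' (abs_lt.mp hα).1 (abs_lt.mp hα).2
  linarith

theorem stationary_point_symmetric_general (α lam cA cB : ℝ)
    (hα : α ∈ Set.Ico (0:ℝ) 1)
    (h1 : (α ^ 2 - 4 * cA) * (1 + cB) + 2 * α ^ 2 * cA + α ^ 2 * lam = 0)
    (h2 : (α ^ 2 - 4 * cB) * (1 + cA) + 2 * α ^ 2 * cB + α ^ 2 * lam = 0) :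
    cA = cB := by
  have hdiff : (cA - cB) * (α ^ 2 - 4) = 0 := by
    rw [← stationarity_lhs_sub_swap, h1, h2, sub_zero]
  have hα2 : α ^ 2 - 4 ≠ 0 := sub_ne_zero.mpr <|
    sq_ne_four_of_abs_lt_two (abs_lt.mpr ⟨by linarith [hα.1], by linarith [hα.2]⟩)
  exact sub_eq_zero.mp ((mul_eq_zero.mp hdiff).resolve_right hα2)

/-- at a stationary point of the Lagrangian for maximizing the
largest eigenvalue of the symmetrically tilted (α = β) CHSH Bell operator —
i.e., a common solution of the stationarity conditions, which after reduction
read `(α²−4c_A)(1+c_B) + 2α²c_A + α²λ = 0` and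
`(α²−4c_B)(1+c_A) + 2α²c_B + α²λ = 0` — with `c_A, c_B ∈ [0,1)` and
`α ∈ [0,1)`, one has `c_A = c_B`. -/
theorem stationary_point_symmetric (α lam cA cB : ℝ)
    (hα : α ∈ Set.Ico (0:ℝ) 1)
    (hcA : cA ∈ Set.Ico (0:ℝ) 1) (hcB : cB ∈ Set.Ico (0:ℝ) 1)
    (h1 : (α ^ 2 - 4 * cA) * (1 + cB) + 2 * α ^ 2 * cA + α ^ 2 * lam = 0)
    (h2 : (α ^ 2 - 4 * cB) * (1 + cA) + 2 * α ^ 2 * cB + α ^ 2 * lam = 0) :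
    cA = cB :=
  stationary_point_symmetric_general α lam cA cB hα h1 h2
end

section
/- For every α ∈ [0,1), the quartic f(λ) = λ⁴ + (4−α²)λ³ + (11α⁴/4 − 12α² − 4)λ² + (2α⁶ − α⁴ − 20α² − 32)λ + 5α⁶ − 21α⁴ + 16α² − 32 has a real root strictly greater than the local bound 2(1+α). -/
/-!
At the local bound the quartic factors as `4 (α - 1)³ (α + 2)⁴`, which is negative for `α < 1`,
while at `λ = 6` it is positive; the intermediate value theorem gives a root in between.
-/

noncomputable def tiltedQuartic (α t : ℝ) : ℝ :=
  t ^ 4 + (4 - α ^ 2) * t ^ 3 + (11 * α ^ 4 / 4 - 12 * α ^ 2 - 4) * t ^ 2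
    + (2 * α ^ 6 - α ^ 4 - 20 * α ^ 2 - 32) * t
    + 5 * α ^ 6 - 21 * α ^ 4 + 16 * α ^ 2 - 32

namespace tiltedQuartic

theorem continuous (α : ℝ) : Continuous (tiltedQuartic α) := by
  unfold tiltedQuartic
  fun_prop

theorem eval_local_bound (α : ℝ) :
    tiltedQuartic α (2 * (1 + α)) = 4 * (α - 1) ^ 3 * (α + 2) ^ 4 := by
  unfold tiltedQuartic
  ring

theorem local_bound_neg {α : ℝ} (hα₀ : -2 < α) (hα₁ : α < 1) :
    tiltedQuartic α (2 * (1 + α)) < 0 := by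
  have hcube : (α - 1) ^ 3 < 0 := Odd.pow_neg (by decide) (by linarith)
  have hfourth : 0 < (α + 2) ^ 4 := pow_pos (by linarith) 4
  rw [eval_local_bound]
  nlinarith

theorem six_pos (α : ℝ) : 0 < tiltedQuartic α 6 := by
  have h : tiltedQuartic α 6 = 17 * α ^ 6 + 72 * α ^ 4 - 752 * α ^ 2 + 1792 := by
    unfold tiltedQuartic
    ring
  rw [h]
  nlinarith [sq_nonneg α, mul_nonneg (sq_nonneg α) (sq_nonneg (α ^ 2 - 3))]

end tiltedQuartic

/-- for every `α ∈ [0,1)`, the quartic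
`f(λ) = λ⁴ + (4−α²)λ³ + (11α⁴/4 − 12α² − 4)λ² + (2α⁶−α⁴−20α²−32)λ + 5α⁶−21α⁴+16α²−32`
has a real root strictly greater than the local bound `2(1+α)`. -/
theorem quartic_root_above_local_bound (α : ℝ) (hα : α ∈ Set.Ico (0:ℝ) 1) :
    ∃ t : ℝ,
      t ^ 4 + (4 - α ^ 2) * t ^ 3 + (11 * α ^ 4 / 4 - 12 * α ^ 2 - 4) * t ^ 2
        + (2 * α ^ 6 - α ^ 4 - 20 * α ^ 2 - 32) * t
        + 5 * α ^ 6 - 21 * α ^ 4 + 16 * α ^ 2 - 32 = 0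
      ∧ 2 * (1 + α) < t := by
  obtain ⟨hα₀, hα₁⟩ := hα
  have hle : 2 * (1 + α) ≤ 6 := by linarith
  have hsign : (0 : ℝ) ∈ Set.Ioo (tiltedQuartic α (2 * (1 + α))) (tiltedQuartic α 6) :=
    ⟨tiltedQuartic.local_bound_neg (by linarith) hα₁, tiltedQuartic.six_pos α⟩
  obtain ⟨t, ht, hroot⟩ :=
    intermediate_value_Ioo hle (tiltedQuartic.continuous α).continuousOn hsign
  exact ⟨t, hroot, ht.1⟩
end

section
/- At α = β = 1 (the critical symmetric point), the quartic f(λ) = λ⁴ + 3λ³ − (53/4)λ² − 51λ − 32 has largest real root exactly 4, equal to the local bound 2(1+α) = 4 of the symmetrically tilted CHSH inequality; hence no quantum violation is possible at α = β = 1. -/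
/-! The quartic factors as `(λ - 4)(λ³ + 7λ² + (59/4)λ + 8)`, and the cubic factor has positive
coefficients, so it does not vanish for `λ > 0`. -/

theorem isGreatest_setOf_eq_zero_of_eq_mul {f q : ℝ → ℝ} {a : ℝ}
    (hf : ∀ t, f t = (t - a) * q t) (hq : ∀ t > a, 0 < q t) :
    IsGreatest {t | f t = 0} a := by
  refine ⟨by simp [hf], fun t ht => not_lt.mp fun hat => ?_⟩
  have hpos : 0 < f t := hf t ▸ mul_pos (sub_pos.mpr hat) (hq t hat)
  exact hpos.ne' ht

/-- at the critical symmetric point `α = β = 1`, the quartic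
`f(λ) = λ⁴ + 3λ³ − (53/4)λ² − 51λ − 32` has largest real root exactly `4`,
equal to the local bound `2(1+α) = 4` of the symmetrically tilted CHSH
inequality; hence no quantum violation is possible at `α = β = 1`. -/
theorem critical_point_no_violation :
    IsGreatest {t : ℝ | t ^ 4 + 3 * t ^ 3 - (53 / 4) * t ^ 2 - 51 * t - 32 = 0}
      (4 : ℝ) := by
  refine isGreatest_setOf_eq_zero_of_eq_mul
    (q := fun t => t ^ 3 + 7 * t ^ 2 + 59 / 4 * t + 8) (fun t => by ring) fun t ht => ?_
  have : 0 < t := by linarith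
  positivity
end
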